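/- Let a > 0 and, for real l ≥ 1, set Y(l) := (1/2)·(1 + √(a/(1+a)) − 1/((2l+1)(1+a) − √(a(1+a)))). Then for every real l ≥ 1 one has 4·(1 + a − √(a(1+a))/l − 1/(4l²)) ≠ 0, Y(l) ≠ 0, and 1 − 1/(4·(1 + a − √(a(1+a))/l − 1/(4l²))·Y(l)) = Y(l−1). -/

import Mathlib

noncomputable def Yfun (a l : ℝ) : ℝ :=
  (1/2) * (1 + Real.sqrt (a / (1 + a))
    - 1 / ((2 * l + 1) * (1 + a) - Real.sqrt (a * (1 + a))))

theorem stmt11 (a : ℝ) (ha : 0 < a) :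
    ∀ l : ℝ, 1 ≤ l →
      (4 * (1 + a - Real.sqrt (a * (1 + a)) / l - 1 / (4 * l ^ 2)) ≠ 0)
      ∧ Yfun a l ≠ 0
      ∧ 1 - 1 / (4 * (1 + a - Real.sqrt (a * (1 + a)) / l - 1 / (4 * l ^ 2)) * Yfun a l)
          = Yfun a (l - 1) := by
  intro l hl
  have ha1 : (0:ℝ) < 1 + a := by linarith
  set s := Real.sqrt (a * (1 + a)) with hsdef
  have hs0 : 0 ≤ s := Real.sqrt_nonneg _
  have hs2 : s ^ 2 = a * (1 + a) := Real.sq_sqrt (by positivity)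
  have hslt : s < 1 + a := by nlinarith [hs2, hs0]
  have hl0 : (0:ℝ) < l := by linarith
  have hq : Real.sqrt (a / (1 + a)) = s / (1 + a) := by
    rw [eq_div_iff ha1.ne', hsdef]
    rw [← Real.sqrt_sq ha1.le, ← Real.sqrt_mul (by positivity)]
    congr 1
    field_simp
    rw [Real.sq_sqrt (by positivity)]
  clear_value s
  have hD1 : (0:ℝ) < (2 * l + 1) * (1 + a) - s := by nlinarith
  have hD2 : (0:ℝ) < (2 * (l - 1) + 1) * (1 + a) - s := by nlinarith
  have hps : (0:ℝ) < 1 + a + s := by linarith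
  -- exact form of Yfun
  have hY : ∀ m : ℝ, (0:ℝ) < (2 * m + 1) * (1 + a) - s →
      Yfun a m = m * (1 + a + s) / ((2 * m + 1) * (1 + a) - s) := by
    intro m hm
    have hm' := hm.ne'
    have hm'' : (1 + a) * (2 * m + 1) - s ≠ 0 := by rw [mul_comm]; exact hm'
    rw [Yfun, hq, ← hsdef]
    field_simp
    linear_combination (-1:ℝ) * hs2
  have hYl := hY l hD1
  have hYl1 := hY (l - 1) hD2
  -- factorization of the quadratic
  have hQ : 1 + a - s / l - 1 / (4 * l ^ 2)
      = ((2 * l + 1) * (1 + a) - s) * ((2 * (l - 1) + 1) * (1 + a) - s)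
        / (4 * l ^ 2 * (1 + a)) := by
    field_simp
    linear_combination (-1:ℝ) * hs2
  have hQpos : (0:ℝ) < 1 + a - s / l - 1 / (4 * l ^ 2) := by
    rw [hQ]; positivity
  have hYpos : (0:ℝ) < Yfun a l := by rw [hYl]; positivity
  refine ⟨by positivity, hYpos.ne', ?_⟩
  rw [hQ, hYl, hYl1]
  have h2 : ((2 * l + 1) * (1 + a) - s) ≠ 0 := hD1.ne'
  have h3 : ((2 * (l - 1) + 1) * (1 + a) - s) ≠ 0 := hD2.ne'
  have key : 4 * (((2 * l + 1) * (1 + a) - s) * ((2 * (l - 1) + 1) * (1 + a) - s)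
        / (4 * l ^ 2 * (1 + a))) * (l * (1 + a + s) / ((2 * l + 1) * (1 + a) - s))
      = ((2 * (l - 1) + 1) * (1 + a) - s) * (1 + a + s) / (l * (1 + a)) := by
    field_simp
  rw [key]
  rw [one_div_div]
  have h3' : (1 + a) * (2 * (l - 1) + 1) - s ≠ 0 := by rw [mul_comm]; exact h3
  field_simp
  linear_combination (-l) * hs2
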